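/- Let h ∈ Γ₀(ℝ^N), let P be a symmetric positive definite N×N matrix, let U₁ ∈ ℝ^{N×r₁} and U₂ ∈ ℝ^{N×r₂} have linearly independent columns, Q₁ = U₁U₁^T, Q₂ = U₂U₂^T, and assume V = P + Q₁ − Q₂ is symmetric positive definite. Set P₁ = P + Q₁ (which is symmetric positive definite). Then for every x ∈ ℝ^N the map M : ℝ^{r₂} → ℝ^{r₂} defined by M(α) = U₂^T( x − prox^{P₁}_h( x + P₁^{-1} U₂ α ) ) + α has a unique zero α₂* ∈ ℝ^{r₂}, and prox^V_h(x) = prox^{P₁}_h( x + P₁^{-1} U₂ α₂* ); moreover prox^{P₁}_h( x + P₁^{-1} U₂ α₂* ) = prox^P_h( x + P₁^{-1} U₂ α₂* − P^{-1} U₁ α₁* ), where α₁* is the unique zero of the map α ↦ U₁^T( (x + P₁^{-1} U₂ α₂*) − prox^P_h( (x + P₁^{-1} U₂ α₂*) − P^{-1} U₁ α ) ) + α. -/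

import Mathlib

open Matrix

noncomputable section

/-- Euclidean norm `‖x‖ = √⟨x,x⟩` on `ℝ^N` (inner product `⟨x,y⟩ = ∑ i, x i * y i`). -/
def euNorm {N : ℕ} (x : Fin N → ℝ) : ℝ := Real.sqrt (x ⬝ᵥ x)

/-- `p` is the proximal point of `h` at `x` in the metric induced by `V`, i.e. `p`
minimizes `z ↦ h z + (1/2)‖x - z‖²_V` (with `‖w‖²_V = ⟨w, V w⟩`). -/
def IsProxPt {N : ℕ} (V : Matrix (Fin N) (Fin N) ℝ) (h : (Fin N → ℝ) → EReal)
    (x p : Fin N → ℝ) : Prop :=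
  ∀ z : Fin N → ℝ,
    h p + ((1 / 2 * ((x - p) ⬝ᵥ (V *ᵥ (x - p))) : ℝ) : EReal) ≤
      h z + ((1 / 2 * ((x - z) ⬝ᵥ (V *ᵥ (x - z))) : ℝ) : EReal)

/-- `h` belongs to `Γ₀(ℝ^N)`: proper, never `-∞`, lower semicontinuous and convex. -/
def Gamma0 {N : ℕ} (h : (Fin N → ℝ) → EReal) : Prop :=
  (∃ z, h z ≠ ⊤) ∧ (∀ z, h z ≠ ⊥) ∧ LowerSemicontinuous h ∧
    ∀ x y : Fin N → ℝ, ∀ t : ℝ, 0 ≤ t → t ≤ 1 →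
      h (t • x + (1 - t) • y) ≤ (t : EReal) * h x + ((1 - t : ℝ) : EReal) * h y

/-! The prox point `p` of `h` at `w` in the metric `W` is characterised by the subgradient
inequality `h z ≥ h p + ⟨W (w - p), z - p⟩`. Hence two prox problems, in metrics `W` and `W'` at
points `y` and `y'`, share their solution `p` as soon as `W (y - p) = W' (y' - p)`. For
`W' = W + U Uᵀ` and `y' = y + W'⁻¹ U α` this identity is `α = -Uᵀ (y - p)`, which is the zero
equation of `M`; for `W = W' + U Uᵀ` the same holds with `y' = y - W'⁻¹ U α`. So the zeros
correspond to the prox point at `y`, which exists (lower semicontinuity and coercivity) and is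
unique (strict convexity of the quadratic term). The theorem applies this to
`P₁ = V + U₂ U₂ᵀ` and then to `P₁ = P + U₁ U₁ᵀ`. -/

open Filter Topology Set

section LinearAlgebra

variable {n m R : Type*} [Fintype n] [Fintype m]

lemma Matrix.IsHermitian.dotProduct_mulVec_comm {W : Matrix n n ℝ} (hW : W.IsHermitian)
    (u v : n → ℝ) : u ⬝ᵥ (W *ᵥ v) = (W *ᵥ u) ⬝ᵥ v := by
  rw [dotProduct_mulVec, ← mulVec_transpose, ← conjTranspose_eq_transpose_of_trivial, hW.eq]

lemma Matrix.IsHermitian.sub_dotProduct_mulVec_sub {W : Matrix n n ℝ} (hW : W.IsHermitian)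
    (u v : n → ℝ) :
    (u - v) ⬝ᵥ (W *ᵥ (u - v)) = u ⬝ᵥ (W *ᵥ u) - 2 * ((W *ᵥ u) ⬝ᵥ v) + v ⬝ᵥ (W *ᵥ v) := by
  have hvu : v ⬝ᵥ (W *ᵥ u) = (W *ᵥ u) ⬝ᵥ v := dotProduct_comm _ _
  simp only [mulVec_sub, dotProduct_sub, sub_dotProduct, hvu, hW.dotProduct_mulVec_comm u v]
  ring

lemma Matrix.PosDef.exists_mul_norm_sq_le {W : Matrix n n ℝ} (hW : W.PosDef) :
    ∃ c : ℝ, 0 < c ∧ ∀ v : n → ℝ, c * ‖v‖ ^ 2 ≤ v ⬝ᵥ (W *ᵥ v) := by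
  rcases subsingleton_or_nontrivial (n → ℝ) with hn | hn
  · exact ⟨1, one_pos, fun v => by simp [Subsingleton.elim v 0]⟩
  obtain ⟨u, hu, hmin⟩ := (isCompact_sphere (0 : n → ℝ) 1).exists_isMinOn
    (NormedSpace.sphere_nonempty.2 zero_le_one)
    (by fun_prop : Continuous fun v : n → ℝ => v ⬝ᵥ (W *ᵥ v)).continuousOn
  have hu0 : u ≠ 0 := ne_zero_of_mem_unit_sphere ⟨u, hu⟩
  refine ⟨u ⬝ᵥ (W *ᵥ u), by simpa using hW.dotProduct_mulVec_pos hu0, fun v => ?_⟩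
  rcases eq_or_ne v 0 with rfl | hv
  · simp
  have hnv : 0 < ‖v‖ := norm_pos_iff.2 hv
  have hvs : ‖v‖⁻¹ • v ∈ Metric.sphere (0 : n → ℝ) 1 := by
    simp [norm_smul, hnv.ne']
  have h := isMinOn_iff.1 hmin _ hvs
  rw [mulVec_smul, dotProduct_smul, smul_dotProduct, smul_eq_mul, smul_eq_mul] at h
  calc u ⬝ᵥ (W *ᵥ u) * ‖v‖ ^ 2
      ≤ ‖v‖⁻¹ * (‖v‖⁻¹ * v ⬝ᵥ (W *ᵥ v)) * ‖v‖ ^ 2 := by gcongr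
    _ = v ⬝ᵥ (W *ᵥ v) := by field_simp

variable [DecidableEq n] [CommRing R]

lemma Matrix.mulVec_add_inv_shift {A : Matrix n n R} (hA : IsUnit A) (U : Matrix n m R)
    (y p : n → R) :
    A *ᵥ (y + A⁻¹ *ᵥ (U *ᵥ -(Uᵀ *ᵥ (y - p))) - p) = (A - U * Uᵀ) *ᵥ (y - p) := by
  rw [add_sub_right_comm, mulVec_add, mulVec_mulVec,
    mul_nonsing_inv _ ((isUnit_iff_isUnit_det A).1 hA), one_mulVec, sub_mulVec, mulVec_neg,
    ← mulVec_mulVec, ← sub_eq_add_neg]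

lemma Matrix.mulVec_sub_inv_shift {A : Matrix n n R} (hA : IsUnit A) (U : Matrix n m R)
    (y p : n → R) :
    A *ᵥ (y - A⁻¹ *ᵥ (U *ᵥ -(Uᵀ *ᵥ (y - p))) - p) = (A + U * Uᵀ) *ᵥ (y - p) := by
  rw [sub_right_comm, mulVec_sub, mulVec_mulVec,
    mul_nonsing_inv _ ((isUnit_iff_isUnit_det A).1 hA), one_mulVec, mulVec_neg, sub_neg_eq_add,
    add_mulVec, ← mulVec_mulVec]

end LinearAlgebra

lemma le_of_forall_le_add_mul {a b C : ℝ} (h : ∀ t : ℝ, 0 < t → t ≤ 1 → a ≤ b + t * C) :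
    a ≤ b := by
  have hlim : Tendsto (fun t : ℝ => b + t * C) (𝓝[>] 0) (𝓝 b) := by
    have : Tendsto (fun t : ℝ => b + t * C) (𝓝 0) (𝓝 (b + 0 * C)) :=
      (continuous_const.add (continuous_id.mul continuous_const)).tendsto 0
    simpa using this.mono_left nhdsWithin_le_nhds
  exact ge_of_tendsto hlim
    (eventually_of_mem (Ioc_mem_nhdsGT zero_lt_one) fun t ht => h t ht.1 ht.2)

lemma LowerSemicontinuous.exists_forall_le_of_eventually_le {α β : Type*} [TopologicalSpace α]
    [LinearOrder β] {f : α → β} (hf : LowerSemicontinuous f) {y : α}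
    (hy : ∀ᶠ z in cocompact α, f y ≤ f z) : ∃ p, ∀ z, f p ≤ f z := by
  obtain ⟨K, hK, hKy⟩ := mem_cocompact.1 hy
  obtain ⟨p, -, hp⟩ := (hf.lowerSemicontinuousOn _).exists_isMinOn (s := insert y K)
    (insert_nonempty y K) (hK.insert y)
  refine ⟨p, fun z => ?_⟩
  by_cases hz : z ∈ K
  · exact isMinOn_iff.1 hp z (mem_insert_of_mem y hz)
  · exact (isMinOn_iff.1 hp y (mem_insert y K)).trans (hKy hz)

lemma tendsto_quadratic_atTop {a k c : ℝ} (hc : 0 < c) :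
    Tendsto (fun s : ℝ => a - k * s + c * s ^ 2) atTop atTop := by
  have h : Tendsto (fun s : ℝ => s * (c * s - k)) atTop atTop :=
    tendsto_id.atTop_mul_atTop₀
      (tendsto_atTop_add_const_right _ (-k) (tendsto_id.const_mul_atTop hc))
  convert tendsto_atTop_add_const_right _ a h using 2
  ring

variable {N : ℕ} {h : (Fin N → ℝ) → EReal}

namespace Gamma0

lemma apply_smul_add_smul_le (hh : Gamma0 h) {x y : Fin N → ℝ} {a b t : ℝ} (hx : h x = a)
    (hy : h y = b) (ht₀ : 0 ≤ t) (ht₁ : t ≤ 1) :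
    h (t • x + (1 - t) • y) ≤ ((t * a + (1 - t) * b : ℝ) : EReal) := by
  have := hh.2.2.2 x y t ht₀ ht₁
  rwa [hx, hy, ← EReal.coe_mul, ← EReal.coe_mul, ← EReal.coe_add] at this

lemma exists_eq_coe (hh : Gamma0 h) {z : Fin N → ℝ} (hz : h z ≠ ⊤) : ∃ a : ℝ, h z = a :=
  ⟨_, (EReal.coe_toReal hz (hh.2.1 z)).symm⟩

/-- Convexity propagates a lower bound on a ball outwards, with a slope inverse to its radius. -/
lemma coe_sub_le_of_forall_dist_lt (hh : Gamma0 h) {z₀ : Fin N → ℝ} {a₀ δ : ℝ} (hδ : 0 < δ)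
    (ha₀ : h z₀ = a₀) (hball : ∀ y, dist y z₀ < δ → ((a₀ - 1 : ℝ) : EReal) < h y)
    (z : Fin N → ℝ) : ((a₀ - 1 - 2 / δ * dist z z₀ : ℝ) : EReal) ≤ h z := by
  set r := dist z z₀
  by_cases hr : r < δ
  · have : 0 ≤ 2 / δ * r := by positivity
    exact le_trans (by exact_mod_cast (by linarith)) (hball z hr).le
  rcases eq_or_ne (h z) ⊤ with hz | hz
  · simp [hz]
  obtain ⟨b, hb⟩ := hh.exists_eq_coe hz
  have hr₀ : 0 < r := hδ.trans_le (not_lt.1 hr)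
  set t := δ / (2 * r)
  have ht₀ : 0 < t := by positivity
  have ht₁ : t ≤ 1 := by
    rw [div_le_one (by positivity)]; linarith [not_lt.1 hr]
  have hdist : dist (t • z + (1 - t) • z₀) z₀ < δ := by
    have : t • z + (1 - t) • z₀ - z₀ = t • (z - z₀) := by module
    rw [dist_eq_norm, this, norm_smul, Real.norm_of_nonneg ht₀.le, ← dist_eq_norm]
    calc t * r = δ / 2 := by simp only [t]; field_simp
      _ < δ := half_lt_self hδ
  have hlt : a₀ - 1 < t * b + (1 - t) * a₀ :=
    EReal.coe_lt_coe_iff.1 ((hball _ hdist).trans_le (hh.apply_smul_add_smul_le hb ha₀ ht₀.le ht₁))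
  have htr : t * (2 / δ * r) = 1 := by simp only [t]; field_simp
  rw [hb, EReal.coe_le_coe_iff]
  nlinarith

lemma exists_lower_bound (hh : Gamma0 h) (x : Fin N → ℝ) :
    ∃ a k : ℝ, ∀ z, ((a - k * dist z x : ℝ) : EReal) ≤ h z := by
  obtain ⟨z₀, hz₀⟩ := hh.1
  obtain ⟨a₀, ha₀⟩ := hh.exists_eq_coe hz₀
  obtain ⟨δ, hδ, hball⟩ := Metric.eventually_nhds_iff.1
    (hh.2.2.1 z₀ ((a₀ - 1 : ℝ) : EReal) (show _ < h z₀ by rw [ha₀]; exact_mod_cast sub_one_lt a₀))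
  refine ⟨a₀ - 1 - 2 / δ * dist x z₀, 2 / δ, fun z =>
    le_trans ?_ (hh.coe_sub_le_of_forall_dist_lt hδ ha₀ (fun y hy => hball hy) z)⟩
  have := mul_le_mul_of_nonneg_left (dist_triangle z x z₀) (by positivity : 0 ≤ 2 / δ)
  exact_mod_cast (by linarith)

end Gamma0

namespace IsProxPt

variable {W W' : Matrix (Fin N) (Fin N) ℝ} {w w' p q : Fin N → ℝ}

lemma ne_top (hp : IsProxPt W h w p) (hproper : ∃ z, h z ≠ ⊤) : h p ≠ ⊤ := by
  obtain ⟨z, hz⟩ := hproper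
  intro htop
  have := hp z
  rw [htop, EReal.top_add_of_ne_bot (EReal.coe_ne_bot _), top_le_iff] at this
  exact EReal.add_ne_top hz (EReal.coe_ne_top _) this

lemma subgradient (hW : W.IsHermitian) (hh : Gamma0 h) (hp : IsProxPt W h w p)
    (z : Fin N → ℝ) : h p + (((W *ᵥ (w - p)) ⬝ᵥ (z - p) : ℝ) : EReal) ≤ h z := by
  obtain ⟨a, ha⟩ := hh.exists_eq_coe (hp.ne_top hh.1)
  rcases eq_or_ne (h z) ⊤ with hz | hz
  · simp [hz]
  obtain ⟨b, hb⟩ := hh.exists_eq_coe hz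
  rw [ha, hb, ← EReal.coe_add, EReal.coe_le_coe_iff]
  set g := W *ᵥ (w - p)
  set d := z - p
  refine le_of_forall_le_add_mul (C := d ⬝ᵥ (W *ᵥ d) / 2) fun t ht₀ ht₁ => ?_
  have hzt : t • z + (1 - t) • p = p + t • d := by module
  have hconv := hh.apply_smul_add_smul_le hb ha ht₀.le ht₁
  have hprox := hp (p + t • d)
  rw [hzt] at hconv
  rw [ha] at hprox
  have hexp : (w - (p + t • d)) ⬝ᵥ (W *ᵥ (w - (p + t • d))) =
      (w - p) ⬝ᵥ (W *ᵥ (w - p)) - 2 * (t * (g ⬝ᵥ d)) + t ^ 2 * (d ⬝ᵥ (W *ᵥ d)) := by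
    rw [← sub_sub, hW.sub_dotProduct_mulVec_sub, mulVec_smul, dotProduct_smul, smul_dotProduct,
      dotProduct_smul]
    simp only [smul_eq_mul]; ring
  have hreal : a + 1 / 2 * ((w - p) ⬝ᵥ (W *ᵥ (w - p))) ≤
      t * b + (1 - t) * a + 1 / 2 * ((w - (p + t • d)) ⬝ᵥ (W *ᵥ (w - (p + t • d)))) := by
    rw [← EReal.coe_le_coe_iff, EReal.coe_add, EReal.coe_add]
    exact hprox.trans (by gcongr)
  rw [hexp] at hreal
  have : t * (a + g ⬝ᵥ d) ≤ t * (b + t * (d ⬝ᵥ (W *ᵥ d) / 2)) := by nlinarith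
  exact le_of_mul_le_mul_left this ht₀

lemma of_subgradient (hW : W.PosSemidef)
    (hsub : ∀ z, h p + (((W *ᵥ (w - p)) ⬝ᵥ (z - p) : ℝ) : EReal) ≤ h z) :
    IsProxPt W h w p := by
  intro z
  have hkey : 1 / 2 * ((w - p) ⬝ᵥ (W *ᵥ (w - p))) ≤
      (W *ᵥ (w - p)) ⬝ᵥ (z - p) + 1 / 2 * ((w - z) ⬝ᵥ (W *ᵥ (w - z))) := by
    have hexp := hW.isHermitian.sub_dotProduct_mulVec_sub (w - p) (z - p)
    rw [sub_sub_sub_cancel_right] at hexp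
    have := hW.dotProduct_mulVec_nonneg (z - p)
    simp only [star_trivial] at this
    linarith
  calc h p + ((1 / 2 * ((w - p) ⬝ᵥ (W *ᵥ (w - p))) : ℝ) : EReal)
      ≤ h p + ((((W *ᵥ (w - p)) ⬝ᵥ (z - p) : ℝ) : EReal) +
          ((1 / 2 * ((w - z) ⬝ᵥ (W *ᵥ (w - z))) : ℝ) : EReal)) := by
        rw [← EReal.coe_add]; gcongr
    _ = (h p + (((W *ᵥ (w - p)) ⬝ᵥ (z - p) : ℝ) : EReal)) +
          ((1 / 2 * ((w - z) ⬝ᵥ (W *ᵥ (w - z))) : ℝ) : EReal) := (add_assoc _ _ _).symm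
    _ ≤ _ := by gcongr; exact hsub z

lemma of_mulVec_sub_eq (hW : W.IsHermitian) (hW' : W'.PosSemidef) (hh : Gamma0 h)
    (hp : IsProxPt W h w p) (heq : W *ᵥ (w - p) = W' *ᵥ (w' - p)) : IsProxPt W' h w' p :=
  of_subgradient hW' (heq ▸ hp.subgradient hW hh)

lemma unique (hW : W.PosDef) (hh : Gamma0 h) (hp : IsProxPt W h w p) (hq : IsProxPt W h w q) :
    p = q := by
  have hpq := hp.subgradient hW.isHermitian hh q
  have hqp := hq.subgradient hW.isHermitian hh p
  obtain ⟨a, ha⟩ := hh.exists_eq_coe (hp.ne_top hh.1)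
  obtain ⟨b, hb⟩ := hh.exists_eq_coe (hq.ne_top hh.1)
  rw [ha, hb, ← EReal.coe_add, EReal.coe_le_coe_iff] at hpq
  rw [ha, hb, ← EReal.coe_add, EReal.coe_le_coe_iff] at hqp
  have hsum : (W *ᵥ (w - p)) ⬝ᵥ (q - p) + (W *ᵥ (w - q)) ⬝ᵥ (p - q) =
      (q - p) ⬝ᵥ (W *ᵥ (q - p)) := by
    rw [← neg_sub q p, dotProduct_neg, ← sub_eq_add_neg, ← sub_dotProduct, ← mulVec_sub,
      sub_sub_sub_cancel_left, dotProduct_comm]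
  by_contra hne
  have hpos := hW.dotProduct_mulVec_pos (sub_ne_zero.2 (Ne.symm hne))
  simp only [star_trivial] at hpos
  linarith

end IsProxPt

lemma exists_isProxPt {W : Matrix (Fin N) (Fin N) ℝ} (hW : W.PosDef) (hh : Gamma0 h)
    (x : Fin N → ℝ) : ∃ p, IsProxPt W h x p := by
  obtain ⟨c, hc, hquad⟩ := hW.exists_mul_norm_sq_le
  obtain ⟨a, k, hlow⟩ := hh.exists_lower_bound x
  obtain ⟨z₀, hz₀⟩ := hh.1
  obtain ⟨a₀, ha₀⟩ := hh.exists_eq_coe hz₀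
  have hlsc : LowerSemicontinuous
      fun z => h z + ((1 / 2 * ((x - z) ⬝ᵥ (W *ᵥ (x - z))) : ℝ) : EReal) :=
    hh.2.2.1.add' (continuous_coe_real_ereal.comp (by fun_prop)).lowerSemicontinuous
      fun z => EReal.continuousAt_add (Or.inr (EReal.coe_ne_bot _)) (Or.inr (EReal.coe_ne_top _))
  have hfar := ((tendsto_quadratic_atTop (a := a) (k := k) (half_pos hc)).comp
    (tendsto_dist_right_cocompact_atTop x)).eventually_ge_atTop
      (a₀ + 1 / 2 * ((x - z₀) ⬝ᵥ (W *ᵥ (x - z₀))))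
  refine hlsc.exists_forall_le_of_eventually_le (y := z₀) (hfar.mono fun z hz => ?_)
  have hq : c / 2 * dist z x ^ 2 ≤ 1 / 2 * ((x - z) ⬝ᵥ (W *ᵥ (x - z))) := by
    have := hquad (x - z)
    rw [← dist_eq_norm, dist_comm] at this
    linarith
  rw [ha₀, ← EReal.coe_add]
  calc (((a₀ + 1 / 2 * ((x - z₀) ⬝ᵥ (W *ᵥ (x - z₀)))) : ℝ) : EReal)
      ≤ ((a - k * dist z x : ℝ) : EReal) + ((1 / 2 * ((x - z) ⬝ᵥ (W *ᵥ (x - z))) : ℝ) : EReal) := by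
        rw [← EReal.coe_add, EReal.coe_le_coe_iff]
        exact hz.trans (by simp only [Function.comp]; linarith)
    _ ≤ _ := by gcongr; exact hlow z

lemma existsUnique_zero_and_isProxPt_of_shift {r : ℕ} {W W' : Matrix (Fin N) (Fin N) ℝ}
    (hW : W.PosDef) (hW' : W'.PosDef) (hh : Gamma0 h) {prox : (Fin N → ℝ) → (Fin N → ℝ)}
    (hprox : ∀ w, IsProxPt W' h w (prox w)) (U : Matrix (Fin N) (Fin r) ℝ) (y : Fin N → ℝ)
    (T : (Fin r → ℝ) → (Fin N → ℝ))
    (hT : ∀ p, W' *ᵥ (T (-(Uᵀ *ᵥ (y - p))) - p) = W *ᵥ (y - p)) :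
    (∃! α, Uᵀ *ᵥ (y - prox (T α)) + α = 0) ∧
      ∀ α, Uᵀ *ᵥ (y - prox (T α)) + α = 0 → IsProxPt W h y (prox (T α)) := by
  have hzero : ∀ α, Uᵀ *ᵥ (y - prox (T α)) + α = 0 → IsProxPt W h y (prox (T α)) := by
    intro α hα
    have hT' := hT (prox (T α))
    rw [← eq_neg_of_add_eq_zero_right hα] at hT'
    exact (hprox (T α)).of_mulVec_sub_eq hW'.isHermitian hW.posSemidef hh hT'
  obtain ⟨q, hq⟩ := exists_isProxPt hW hh y
  have hTq : prox (T (-(Uᵀ *ᵥ (y - q)))) = q :=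
    (hprox _).unique hW' hh (hq.of_mulVec_sub_eq hW.isHermitian hW'.posSemidef hh (hT q).symm)
  refine ⟨⟨-(Uᵀ *ᵥ (y - q)), by beta_reduce; rw [hTq, add_neg_cancel], fun α hα => ?_⟩, hzero⟩
  rw [eq_neg_of_add_eq_zero_right hα, (hzero α hα).unique hW hh hq]

theorem stmt_4_general {N r₁ r₂ : ℕ}
    (h : (Fin N → ℝ) → EReal) (hh : Gamma0 h)
    (P : Matrix (Fin N) (Fin N) ℝ) (hP : P.PosDef)
    (U₁ : Matrix (Fin N) (Fin r₁) ℝ)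
    (U₂ : Matrix (Fin N) (Fin r₂) ℝ)
    (V : Matrix (Fin N) (Fin N) ℝ) (hVdef : V = P + U₁ * U₁ᵀ - U₂ * U₂ᵀ)
    (hVpd : V.PosDef)
    (P₁ : Matrix (Fin N) (Fin N) ℝ) (hP₁ : P₁ = P + U₁ * U₁ᵀ)
    (proxP proxP1 : (Fin N → ℝ) → (Fin N → ℝ))
    (hproxP : ∀ w : Fin N → ℝ, IsProxPt P h w (proxP w))
    (hproxP1 : ∀ w : Fin N → ℝ, IsProxPt P₁ h w (proxP1 w))
    (x : Fin N → ℝ)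
    (M : (Fin r₂ → ℝ) → (Fin r₂ → ℝ))
    (hM : ∀ α : Fin r₂ → ℝ, M α = U₂ᵀ *ᵥ (x - proxP1 (x + P₁⁻¹ *ᵥ (U₂ *ᵥ α))) + α) :
    P₁.PosDef ∧
    (∃! α₂ : Fin r₂ → ℝ, M α₂ = 0) ∧
    ∀ α₂ : Fin r₂ → ℝ, M α₂ = 0 →
      IsProxPt V h x (proxP1 (x + P₁⁻¹ *ᵥ (U₂ *ᵥ α₂))) ∧
      (∃! α₁ : Fin r₁ → ℝ,
        U₁ᵀ *ᵥ ((x + P₁⁻¹ *ᵥ (U₂ *ᵥ α₂)) -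
            proxP ((x + P₁⁻¹ *ᵥ (U₂ *ᵥ α₂)) - P⁻¹ *ᵥ (U₁ *ᵥ α₁))) + α₁ = 0) ∧
      ∀ α₁ : Fin r₁ → ℝ,
        U₁ᵀ *ᵥ ((x + P₁⁻¹ *ᵥ (U₂ *ᵥ α₂)) -
            proxP ((x + P₁⁻¹ *ᵥ (U₂ *ᵥ α₂)) - P⁻¹ *ᵥ (U₁ *ᵥ α₁))) + α₁ = 0 →
          proxP1 (x + P₁⁻¹ *ᵥ (U₂ *ᵥ α₂)) =
            proxP ((x + P₁⁻¹ *ᵥ (U₂ *ᵥ α₂)) - P⁻¹ *ᵥ (U₁ *ᵥ α₁)) := by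
  obtain rfl : M = _ := funext hM
  have hP₁pd : P₁.PosDef := hP₁ ▸ hP.add_posSemidef (by
    simpa using posSemidef_self_mul_conjTranspose U₁)
  have hV : V = P₁ - U₂ * U₂ᵀ := by rw [hVdef, hP₁]
  obtain ⟨hM₀, hVprox⟩ := existsUnique_zero_and_isProxPt_of_shift hVpd hP₁pd hh hproxP1 U₂ x
    (fun α => x + P₁⁻¹ *ᵥ (U₂ *ᵥ α)) fun p => hV ▸ mulVec_add_inv_shift hP₁pd.isUnit U₂ x p
  refine ⟨hP₁pd, hM₀, fun α₂ hα₂ => ?_⟩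
  obtain ⟨hzero₁, hP₁prox⟩ := existsUnique_zero_and_isProxPt_of_shift hP₁pd hP hh hproxP U₁
    (x + P₁⁻¹ *ᵥ (U₂ *ᵥ α₂)) (fun α => x + P₁⁻¹ *ᵥ (U₂ *ᵥ α₂) - P⁻¹ *ᵥ (U₁ *ᵥ α))
    fun p => hP₁ ▸ mulVec_sub_inv_shift hP.isUnit U₁ _ p
  exact ⟨hVprox α₂ hα₂, hzero₁, fun α₁ hα₁ => (hproxP1 _).unique hP₁pd hh (hP₁prox α₁ hα₁)⟩

/-- For `V = P + Q₁ - Q₂` SPD with `Qᵢ = Uᵢ Uᵢᵀ` and `P₁ = P + Q₁`: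
`P₁` is SPD, the map `M(α) = U₂ᵀ(x - prox^{P₁}_h(x + P₁⁻¹ U₂ α)) + α` has a unique zero
`α₂*`, `prox^V_h(x) = prox^{P₁}_h(x + P₁⁻¹ U₂ α₂*)`, and the latter equals
`prox^P_h(x + P₁⁻¹ U₂ α₂* - P⁻¹ U₁ α₁*)` where `α₁*` is the unique zero of the inner map. -/
theorem stmt_4 {N r₁ r₂ : ℕ}
    (h : (Fin N → ℝ) → EReal) (hh : Gamma0 h)
    (P : Matrix (Fin N) (Fin N) ℝ) (hP : P.PosDef)
    (U₁ : Matrix (Fin N) (Fin r₁) ℝ)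
    (hU₁ : LinearIndependent ℝ (fun j : Fin r₁ => fun i : Fin N => U₁ i j))
    (U₂ : Matrix (Fin N) (Fin r₂) ℝ)
    (hU₂ : LinearIndependent ℝ (fun j : Fin r₂ => fun i : Fin N => U₂ i j))
    (V : Matrix (Fin N) (Fin N) ℝ) (hVdef : V = P + U₁ * U₁ᵀ - U₂ * U₂ᵀ)
    (hVpd : V.PosDef)
    (P₁ : Matrix (Fin N) (Fin N) ℝ) (hP₁ : P₁ = P + U₁ * U₁ᵀ)
    (proxP proxP1 : (Fin N → ℝ) → (Fin N → ℝ))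
    (hproxP : ∀ w : Fin N → ℝ, IsProxPt P h w (proxP w))
    (hproxP1 : ∀ w : Fin N → ℝ, IsProxPt P₁ h w (proxP1 w))
    (x : Fin N → ℝ)
    (M : (Fin r₂ → ℝ) → (Fin r₂ → ℝ))
    (hM : ∀ α : Fin r₂ → ℝ, M α = U₂ᵀ *ᵥ (x - proxP1 (x + P₁⁻¹ *ᵥ (U₂ *ᵥ α))) + α) :
    P₁.PosDef ∧
    (∃! α₂ : Fin r₂ → ℝ, M α₂ = 0) ∧
    ∀ α₂ : Fin r₂ → ℝ, M α₂ = 0 →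
      IsProxPt V h x (proxP1 (x + P₁⁻¹ *ᵥ (U₂ *ᵥ α₂))) ∧
      (∃! α₁ : Fin r₁ → ℝ,
        U₁ᵀ *ᵥ ((x + P₁⁻¹ *ᵥ (U₂ *ᵥ α₂)) -
            proxP ((x + P₁⁻¹ *ᵥ (U₂ *ᵥ α₂)) - P⁻¹ *ᵥ (U₁ *ᵥ α₁))) + α₁ = 0) ∧
      ∀ α₁ : Fin r₁ → ℝ,
        U₁ᵀ *ᵥ ((x + P₁⁻¹ *ᵥ (U₂ *ᵥ α₂)) -
            proxP ((x + P₁⁻¹ *ᵥ (U₂ *ᵥ α₂)) - P⁻¹ *ᵥ (U₁ *ᵥ α₁))) + α₁ = 0 →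
          proxP1 (x + P₁⁻¹ *ᵥ (U₂ *ᵥ α₂)) =
            proxP ((x + P₁⁻¹ *ᵥ (U₂ *ᵥ α₂)) - P⁻¹ *ᵥ (U₁ *ᵥ α₁)) :=
  stmt_4_general h hh P hP U₁ U₂ V hVdef hVpd P₁ hP₁ proxP proxP1 hproxP hproxP1 x M hM
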